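/- For k = 2 and c* > 0, let u_{c*}(ξ) = √(2c*) sech(√c* ξ) and ψ*(ξ) = 2c* sech²(√c* ξ). Then the function w₀ = ½(u_{c*}³ - 4c* u_{c*}) satisfies L_{c*} w₀ = (3/2) u_{c*} ψ*², where L_{c*} = -d²/dξ² + c* - 3u_{c*}². -/

import Mathlib

noncomputable def sech (x : ℝ) : ℝ := 2 / (Real.exp x + Real.exp (-x))

/-!
The profile u = a sech(b ξ) with a² = 2b² solves u'' = b²u - u³ and has the first integral
u'² = b²u² - u⁴/2. For w = P(u) with P a polynomial, w'' = P''(u) u'² + P'(u) u'' is therefore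
again a polynomial in u, and since ψ = u² the claimed identity becomes an identity between
polynomials in u.
-/

open Real

theorem sech_eq_inv_cosh (x : ℝ) : sech x = (cosh x)⁻¹ := by
  rw [sech, cosh_eq]
  field_simp

theorem hasDerivAt_sech (x : ℝ) : HasDerivAt sech (-(tanh x * sech x)) x := by
  rw [show sech = fun y => (cosh y)⁻¹ from funext sech_eq_inv_cosh]
  refine ((hasDerivAt_cosh x).inv (cosh_pos x).ne').congr_deriv ?_
  rw [tanh_eq_sinh_div_cosh]
  field_simp

theorem hasDerivAt_neg_tanh_mul_sech (x : ℝ) :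
    HasDerivAt (fun y => -(tanh y * sech y)) (sech x - 2 * sech x ^ 3) x := by
  have hfun : (fun y => -(tanh y * sech y)) = fun y => -(sinh y / cosh y ^ 2) := by
    funext y
    rw [tanh_eq_sinh_div_cosh, sech_eq_inv_cosh]
    field_simp
  rw [hfun]
  have hcosh := (cosh_pos x).ne'
  refine ((hasDerivAt_sinh x).div ((hasDerivAt_cosh x).pow 2) (pow_ne_zero 2 hcosh)).neg
    |>.congr_deriv ?_
  simp only [Pi.pow_apply, sech_eq_inv_cosh, Nat.cast_ofNat, Nat.add_one_sub_one, pow_one]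
  field_simp
  linear_combination (-2) * cosh_sq x

theorem tanh_mul_sech_sq (x : ℝ) : (tanh x * sech x) ^ 2 = sech x ^ 2 - sech x ^ 4 := by
  have hcosh := (cosh_pos x).ne'
  rw [tanh_eq_sinh_div_cosh, sech_eq_inv_cosh]
  field_simp
  linear_combination (-1) * cosh_sq x

section Soliton

variable {a b : ℝ}

theorem hasDerivAt_soliton (x : ℝ) :
    HasDerivAt (fun y => a * sech (b * y)) (-(a * b) * (tanh (b * x) * sech (b * x))) x := by
  refine (((hasDerivAt_sech (b * x)).comp x ((hasDerivAt_id x).const_mul b)).const_mul a)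
    |>.congr_deriv ?_
  ring

theorem hasDerivAt_soliton_deriv (hab : a ^ 2 = 2 * b ^ 2) (x : ℝ) :
    HasDerivAt (fun y => -(a * b) * (tanh (b * y) * sech (b * y)))
      (b ^ 2 * (a * sech (b * x)) - (a * sech (b * x)) ^ 3) x := by
  have h := ((hasDerivAt_neg_tanh_mul_sech (b * x)).comp x
    ((hasDerivAt_id x).const_mul b)).const_mul (a * b)
  have hfun : (fun y => -(a * b) * (tanh (b * y) * sech (b * y)))
      = fun y => a * b * -(tanh (b * y) * sech (b * y)) := by
    funext y
    ring
  rw [hfun]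
  refine h.congr_deriv ?_
  linear_combination (a * sech (b * x) ^ 3) * hab

theorem soliton_deriv_sq (hab : a ^ 2 = 2 * b ^ 2) (x : ℝ) :
    (-(a * b) * (tanh (b * x) * sech (b * x))) ^ 2
      = b ^ 2 * (a * sech (b * x)) ^ 2 - (a * sech (b * x)) ^ 4 / 2 := by
  rw [mul_pow, tanh_mul_sech_sq]
  linear_combination (a ^ 2 * sech (b * x) ^ 4 / 2) * hab

end Soliton

theorem linearized_apply_cubic_eq_of_soliton_ode {c : ℝ} {u u' : ℝ → ℝ}
    (hu : ∀ x, HasDerivAt u (u' x) x)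
    (hu' : ∀ x, HasDerivAt u' (c * u x - u x ^ 3) x)
    (henergy : ∀ x, u' x ^ 2 = c * u x ^ 2 - u x ^ 4 / 2) (x : ℝ) :
    -(deriv (deriv fun y => (1 / 2) * (u y ^ 3 - 4 * c * u y))) x
        + c * ((1 / 2) * (u x ^ 3 - 4 * c * u x))
        - 3 * u x ^ 2 * ((1 / 2) * (u x ^ 3 - 4 * c * u x))
      = (3 / 2) * u x * (u x ^ 2) ^ 2 := by
  have hw : deriv (fun y => (1 / 2) * (u y ^ 3 - 4 * c * u y))
      = fun y => (1 / 2) * (3 * u y ^ 2 - 4 * c) * u' y := by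
    funext y
    refine ((((hu y).pow 3).sub ((hu y).const_mul (4 * c))).const_mul (1 / 2)).deriv.trans ?_
    simp only [Nat.cast_ofNat]
    ring
  have hw' : HasDerivAt (fun y => (1 / 2) * (3 * u y ^ 2 - 4 * c) * u' y)
      (3 * u x * u' x ^ 2 + (1 / 2) * (3 * u x ^ 2 - 4 * c) * (c * u x - u x ^ 3)) x := by
    refine ((((hu x).pow 2).const_mul 3).sub_const (4 * c) |>.const_mul (1 / 2) |>.mul (hu' x))
      |>.congr_deriv ?_
    simp only [Pi.pow_apply, Nat.cast_ofNat]
    ring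
  rw [hw, hw'.deriv]
  linear_combination (-3 * u x) * henergy x

theorem w0_solves_inhomogeneous_eq
    (cs : ℝ) (hcs : 0 < cs) (u ψ w₀ : ℝ → ℝ)
    (hu : ∀ ξ : ℝ, u ξ = Real.sqrt (2 * cs) * sech (Real.sqrt cs * ξ))
    (hψ : ∀ ξ : ℝ, ψ ξ = 2 * cs * sech (Real.sqrt cs * ξ) ^ 2)
    (hw : ∀ ξ : ℝ, w₀ ξ = (1 / 2) * ((u ξ) ^ 3 - 4 * cs * u ξ)) :
    ∀ ξ : ℝ, -(deriv (deriv w₀)) ξ + cs * w₀ ξ - 3 * (u ξ) ^ 2 * w₀ ξ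
      = (3 / 2) * u ξ * (ψ ξ) ^ 2 := by
  intro ξ
  have hc : √cs ^ 2 = cs := sq_sqrt hcs.le
  have hab : √(2 * cs) ^ 2 = 2 * √cs ^ 2 := by rw [hc, sq_sqrt (by positivity)]
  have hψu : ψ ξ = u ξ ^ 2 := by rw [hψ, hu, mul_pow, sq_sqrt (by positivity)]
  rw [show w₀ = _ from funext hw, hψu]
  refine linearized_apply_cubic_eq_of_soliton_ode
    (u' := fun x => -(√(2 * cs) * √cs) * (tanh (√cs * x) * sech (√cs * x)))
    ?_ (fun x => ?_) (fun x => ?_) ξ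
  · rw [funext hu]
    exact hasDerivAt_soliton
  · simpa only [hc, hu] using hasDerivAt_soliton_deriv hab x
  · simpa only [hc, hu] using soliton_deriv_sq hab x
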